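/- arXiv:2110.14708 — 2 statements merged into one kernel-verified Lean document; each statement's English description precedes it below -/
import Mathlib

section
/- (Proposition 1: sufficient conditions for identifiability under MNAR) Assume (A1'), (A2) and (A3'). If two parameter pairs (θ¹, λ¹) and (θ², λ²) satisfy (π_{O'_l,R})_* P(θ¹, λ¹) = (π_{O'_l,R})_* P(θ², λ²) for every l = 1, …, L (i.e., they induce the same joint law of (X_{O'_l}, R) for every pattern in the cover), then θ¹ = θ². In particular, any parameter pair whose joint laws of (X_{O'_l}, R) agree for all l with those of the ground truth (θ*, λ*) has θ-component equal to θ*, so the ground truth parameter θ* is uniquely identified. -/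
open MeasureTheory

/-- Proposition 1: sufficient conditions for identifiability under MNAR.
Setup: `ι` a finite index set, `X d` measurable spaces, `Θ d` and `Λ` parameter sets,
`P θ λ` the joint law of the complete data `X` and the missingness mask `R` on
`(Π d, X d) × (ι → Bool)`.
(A1'): for every nonempty `O ⊆ ι` there is a map `μ O` such that the pushforward of
`P θ λ` under `(x, r) ↦ (x_d)_{d ∈ O}` equals `μ O ((θ d)_{d ∈ O})` for all `(θ, λ)`.
(A2): there is a partition `𝒜` of `ι` with each `μ Os`, `Os ∈ 𝒜`, injective.
(A3'): there is a finite cover `𝒞` of `ι` such that for every `O' ∈ 𝒞` and every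
`c ∈ O'` there is a partition cell `Os ∈ 𝒜` with `c ∈ Os ⊆ O'`.
Conclusion: if `(θ¹, λ¹)` and `(θ², λ²)` induce the same joint law of `(X_{O'}, R)`
for every `O' ∈ 𝒞`, then `θ¹ = θ²`; in particular the ground-truth parameter `θ*` is
uniquely identified. -/
theorem identifiability_under_MNAR
    {ι : Type*} [Fintype ι]
    (X : ι → Type*) [∀ d, MeasurableSpace (X d)]
    (Θ : ι → Type*) (Λ : Type*)
    (P : (∀ d, Θ d) → Λ → Measure ((∀ d, X d) × (ι → Bool)))
    (hP : ∀ θ lam, IsProbabilityMeasure (P θ lam))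
    (μ : (O : Set ι) → ((∀ d : O, Θ d) → Measure (∀ d : O, X d)))
    (hA1 : ∀ (O : Set ι), O.Nonempty → ∀ (θ : ∀ d, Θ d) (lam : Λ),
      Measure.map (fun p : (∀ d, X d) × (ι → Bool) => fun d : O => p.1 d) (P θ lam)
        = μ O (fun d : O => θ d))
    (𝒜 : Set (Set ι)) (hA2part : Setoid.IsPartition 𝒜)
    (hA2inj : ∀ Os ∈ 𝒜, Function.Injective (μ Os))
    (𝒞 : Finset (Set ι))
    (hcover : ∀ c : ι, ∃ O' ∈ 𝒞, c ∈ O')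
    (hA3 : ∀ O' ∈ 𝒞, ∀ c ∈ O', ∃ Os ∈ 𝒜, c ∈ Os ∧ Os ⊆ O')
    (θ1 θ2 : ∀ d, Θ d) (lam1 lam2 : Λ)
    (heq : ∀ O' ∈ 𝒞,
      Measure.map (fun p : (∀ d, X d) × (ι → Bool) => ((fun d : O' => p.1 d), p.2))
          (P θ1 lam1)
        = Measure.map (fun p : (∀ d, X d) × (ι → Bool) => ((fun d : O' => p.1 d), p.2))
          (P θ2 lam2)) :
    θ1 = θ2 := by
  funext c
  obtain ⟨O', hO'𝒞, hcO'⟩ := hcover c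
  obtain ⟨Os, hOs𝒜, hcOs, hsub⟩ := hA3 O' hO'𝒞 c hcO'
  have hOsne : Os.Nonempty := ⟨c, hcOs⟩
  -- the restriction map from (X_{O'} × R) to X_{Os}
  set g : ((∀ d : O', X d) × (ι → Bool)) → (∀ d : Os, X d) :=
    fun q => fun d : Os => q.1 ⟨d.1, hsub d.2⟩ with hg
  have hgmeas : Measurable g := by
    apply measurable_pi_lambda
    intro d
    exact (measurable_pi_apply (⟨d.1, hsub d.2⟩ : O')).comp measurable_fst
  set f1 : ((∀ d, X d) × (ι → Bool)) → ((∀ d : O', X d) × (ι → Bool)) :=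
    fun p => ((fun d : O' => p.1 d), p.2) with hf1
  have hf1meas : Measurable f1 := by
    apply Measurable.prod
    · exact measurable_pi_lambda _ (fun d => (measurable_pi_apply d.1).comp measurable_fst)
    · exact measurable_snd
  have key : ∀ (θ : ∀ d, Θ d) (lam : Λ),
      Measure.map g (Measure.map f1 (P θ lam)) = μ Os (fun d : Os => θ d) := by
    intro θ lam
    rw [Measure.map_map hgmeas hf1meas]
    have : (g ∘ f1) = (fun p : (∀ d, X d) × (ι → Bool) => fun d : Os => p.1 d) := rfl
    rw [this]
    exact hA1 Os hOsne θ lam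
  have h1 := key θ1 lam1
  rw [heq O' hO'𝒞, key θ2 lam2] at h1
  have hinj := hA2inj Os hOs𝒜 h1
  exact (congrFun hinj ⟨c, hcOs⟩).symm
end

section
/- (Proposition 3: identifiability under MNAR with data-model mismatch) Assume (A1'), (A2) and (A3'). Let Ξ_τ and Ξ_γ be further parameter sets, let Φ_θ⁻¹ : Ξ_τ → Π_{d∈ι} Θ_d and Φ_λ⁻¹ : Ξ_γ → Λ be injective maps (a decoupled reparameterization), and define the induced family P̃(τ, γ) := P(Φ_θ⁻¹(τ), Φ_λ⁻¹(γ)). Let (τ*, γ*) ∈ Ξ_τ × Ξ_γ be the ground truth. If a parameter pair (θ̂, λ̂) satisfies (π_{O'_l,R})_* P(θ̂, λ̂) = (π_{O'_l,R})_* P̃(τ*, γ*) for every l = 1, …, L, then θ̂ = Φ_θ⁻¹(τ*); in particular, by injectivity of Φ_θ⁻¹, the ground truth parameter τ* is uniquely determined by θ̂. -/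
open MeasureTheory

/-- Proposition 3: identifiability under MNAR with data-model mismatch.
Setup as in Proposition 1, with assumptions (A1'), (A2), (A3'). In addition, let
`Φ_θ⁻¹ : Ξ_τ → Π d, Θ d` and `Φ_λ⁻¹ : Ξ_γ → Λ` be injective maps (a decoupled
reparameterization), inducing the family `P̃ (τ, γ) := P (Φ_θ⁻¹ τ) (Φ_λ⁻¹ γ)`, and let
`(τ*, γ*)` be the ground truth. If a parameter pair `(θ̂, λ̂)` induces the same joint
law of `(X_{O'}, R)` as `P̃ (τ*, γ*)` for every `O'` in the cover, then
`θ̂ = Φ_θ⁻¹ τ*`; in particular, by injectivity of `Φ_θ⁻¹`, the ground-truth parameter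
`τ*` is uniquely determined by `θ̂`. -/
theorem identifiability_under_MNAR_with_mismatch
    {ι : Type*} [Fintype ι]
    (X : ι → Type*) [∀ d, MeasurableSpace (X d)]
    (Θ : ι → Type*) (Λ : Type*)
    (P : (∀ d, Θ d) → Λ → Measure ((∀ d, X d) × (ι → Bool)))
    (hP : ∀ θ lam, IsProbabilityMeasure (P θ lam))
    (μ : (O : Set ι) → ((∀ d : O, Θ d) → Measure (∀ d : O, X d)))
    (hA1 : ∀ (O : Set ι), O.Nonempty → ∀ (θ : ∀ d, Θ d) (lam : Λ),
      Measure.map (fun p : (∀ d, X d) × (ι → Bool) => fun d : O => p.1 d) (P θ lam)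
        = μ O (fun d : O => θ d))
    (𝒜 : Set (Set ι)) (hA2part : Setoid.IsPartition 𝒜)
    (hA2inj : ∀ Os ∈ 𝒜, Function.Injective (μ Os))
    (𝒞 : Finset (Set ι))
    (hcover : ∀ c : ι, ∃ O' ∈ 𝒞, c ∈ O')
    (hA3 : ∀ O' ∈ 𝒞, ∀ c ∈ O', ∃ Os ∈ 𝒜, c ∈ Os ∧ Os ⊆ O')
    {Ξτ Ξγ : Type*}
    (Φθinv : Ξτ → ∀ d, Θ d) (hΦθ : Function.Injective Φθinv)
    (Φlinv : Ξγ → Λ) (hΦl : Function.Injective Φlinv)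
    (τstar : Ξτ) (γstar : Ξγ)
    (θhat : ∀ d, Θ d) (lamhat : Λ)
    (heq : ∀ O' ∈ 𝒞,
      Measure.map (fun p : (∀ d, X d) × (ι → Bool) => ((fun d : O' => p.1 d), p.2))
          (P θhat lamhat)
        = Measure.map (fun p : (∀ d, X d) × (ι → Bool) => ((fun d : O' => p.1 d), p.2))
          (P (Φθinv τstar) (Φlinv γstar))) :
    θhat = Φθinv τstar ∧ ∀ τ : Ξτ, Φθinv τ = θhat → τ = τstar := by
  have key : ∀ d, θhat d = Φθinv τstar d := by
    intro d
    obtain ⟨O', hO', hdO'⟩ := hcover d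
    obtain ⟨Os, hOs, hdOs, hsub⟩ := hA3 O' hO' d hdO'
    have hne : Os.Nonempty := ⟨d, hdOs⟩
    have hmeas : Measurable (fun q : (∀ c : O', X c) × (ι → Bool) =>
        fun c : Os => q.1 ⟨c.1, hsub c.2⟩) :=
      measurable_pi_lambda _ fun c => (measurable_pi_apply _).comp measurable_fst
    have hproj : ∀ θ lam, Measure.map (fun q : (∀ c : O', X c) × (ι → Bool) =>
        fun c : Os => q.1 ⟨c.1, hsub c.2⟩)
        (Measure.map (fun p : (∀ d, X d) × (ι → Bool) =>
          ((fun c : O' => p.1 c), p.2)) (P θ lam))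
        = μ Os (fun c : Os => θ c) := by
      intro θ lam
      rw [Measure.map_map hmeas (by fun_prop), ← hA1 Os hne θ lam]
      rfl
    have h1 := hproj θhat lamhat
    rw [heq O' hO', hproj] at h1
    exact (congrFun (hA2inj Os hOs h1) ⟨d, hdOs⟩).symm
  have hθ : θhat = Φθinv τstar := funext key
  exact ⟨hθ, fun τ hτ => hΦθ (hτ.trans hθ)⟩
end
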